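/- Write the augmented distance squared function Φ(u,v,x,y,z,t) = −(1/2)(‖(x,y,z) − g(u,v)‖² − t²) for g in Monge form with coefficients k₁, k₂, a_{ij}. Then the Taylor expansion of Φ in (u,v) is Φ = c₀₀ + xu + yv + (1/2)(k̂₁u² + k̂₂v²) + Σ_{i+j≥3}(c_{ij}/(i!j!))u^iv^j, where c₀₀ = (t² − x² − y² − z²)/2, k̂_i = k_i z − 1 (i = 1,2), c_{ij} = a_{ij}z for i+j = 3, c₄₀ = a₄₀z − 3k₁², c₃₁ = a₃₁z, c₂₂ = a₂₂z − k₁k₂, c₁₃ = a₁₃z, c₀₄ = a₀₄z − 3k₂², c₅₀ = a₅₀z − 10k₁a₃₀, and c₀₅ = a₀₅z − 10k₂a₀₃. -/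

import Mathlib

/-!
Expanding the square, `Φ = c₀₀ + x u + y v - (u² + v²)/2 + z f - f²/2`. The quadratic polynomial
contributes only up to order two, `z f` contributes `z` times the Taylor coefficients of `f`, and by
the Leibniz rule every derivative of `f²` is a sum of products of two derivatives of `f`; since `f`
and its gradient vanish at the origin, only products of derivatives of order at least two survive,
which gives the corrections `-3k₁²`, `-k₁k₂` and `-10k₁a₃₀` in orders four and five.
-/

noncomputable section

open scoped ContDiff

/-- Partial derivative in the first variable. -/
def pdu (f : ℝ × ℝ → ℝ) (p : ℝ × ℝ) : ℝ := fderiv ℝ f p (1, 0)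

/-- Partial derivative in the second variable. -/
def pdv (f : ℝ × ℝ → ℝ) (p : ℝ × ℝ) : ℝ := fderiv ℝ f p (0, 1)

def dirDeriv {E : Type*} [NormedAddCommGroup E] [NormedSpace ℝ E] (v : E) (g : E → ℝ) : E → ℝ :=
  fun p => fderiv ℝ g p v

theorem pdu_eq_dirDeriv : pdu = dirDeriv (1, 0) := rfl

theorem pdv_eq_dirDeriv : pdv = dirDeriv (0, 1) := rfl

section dirDeriv

variable {E : Type*} [NormedAddCommGroup E] [NormedSpace ℝ E] {g h : E → ℝ} (v : E)

@[simp]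
theorem dirDeriv_add (hg : Differentiable ℝ g) (hh : Differentiable ℝ h) :
    dirDeriv v (fun p => g p + h p) = fun p => dirDeriv v g p + dirDeriv v h p := by
  ext p; simp [dirDeriv, fderiv_fun_add (hg p) (hh p)]

@[simp]
theorem dirDeriv_sub (hg : Differentiable ℝ g) (hh : Differentiable ℝ h) :
    dirDeriv v (fun p => g p - h p) = fun p => dirDeriv v g p - dirDeriv v h p := by
  ext p; simp [dirDeriv, fderiv_fun_sub (hg p) (hh p)]

@[simp]
theorem dirDeriv_mul (hg : Differentiable ℝ g) (hh : Differentiable ℝ h) :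
    dirDeriv v (fun p => g p * h p) = fun p => dirDeriv v g p * h p + g p * dirDeriv v h p := by
  ext p; simp [dirDeriv, fderiv_fun_mul (hg p) (hh p)]; ring

@[simp]
theorem dirDeriv_const (c : ℝ) : dirDeriv v (fun _ : E => c) = fun _ => 0 := by
  ext p; simp [dirDeriv]

@[fun_prop]
theorem contDiff_dirDeriv (hg : ContDiff ℝ ∞ g) : ContDiff ℝ ∞ (dirDeriv v g) :=
  (hg.fderiv_right (m := ∞) le_rfl).clm_apply contDiff_const

@[fun_prop]
theorem differentiable_dirDeriv (hg : ContDiff ℝ ∞ g) : Differentiable ℝ (dirDeriv v g) :=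
  (contDiff_dirDeriv v hg).differentiable (by simp)

end dirDeriv

@[simp]
theorem dirDeriv_fst (v : ℝ × ℝ) : dirDeriv v (fun p => p.1) = fun _ => v.1 := by
  ext p; simp [dirDeriv, fderiv_fst]

@[simp]
theorem dirDeriv_snd (v : ℝ × ℝ) : dirDeriv v (fun p => p.2) = fun _ => v.2 := by
  ext p; simp [dirDeriv, fderiv_snd]

def augmentedDistSq (f : ℝ × ℝ → ℝ) (x y z t : ℝ) (p : ℝ × ℝ) : ℝ :=
  -(1/2) * ((x - p.1)^2 + (y - p.2)^2 + (z - f p)^2 - t^2)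

section augmentedDistSq

variable {f : ℝ × ℝ → ℝ} {x y z t : ℝ}

theorem augmentedDistSq_eq_expanded :
    augmentedDistSq f x y z t = fun p => (t ^ 2 - x ^ 2 - y ^ 2 - z ^ 2) / 2 + x * p.1 + y * p.2
      - 1 / 2 * (p.1 * p.1 + p.2 * p.2) + z * f p - 1 / 2 * (f p * f p) := by
  ext p; unfold augmentedDistSq; ring

theorem augmentedDistSq_apply_zero (h00 : f 0 = 0) :
    augmentedDistSq f x y z t 0 = (t ^ 2 - x ^ 2 - y ^ 2 - z ^ 2) / 2 := by
  simp [augmentedDistSq, h00]; ring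

theorem augmentedDistSq_first_order (hf : ContDiff ℝ ∞ f) (h10 : pdu f 0 = 0)
    (h01 : pdv f 0 = 0) :
    pdu (augmentedDistSq f x y z t) 0 = x ∧ pdv (augmentedDistSq f x y z t) 0 = y := by
  rw [augmentedDistSq_eq_expanded, pdu_eq_dirDeriv, pdv_eq_dirDeriv] at *
  constructor <;> simp (disch := fun_prop (disch := simp)) [h10, h01]

theorem augmentedDistSq_second_order (hf : ContDiff ℝ ∞ f) (h00 : f 0 = 0) (h10 : pdu f 0 = 0)
    (h01 : pdv f 0 = 0) :
    pdu (pdu (augmentedDistSq f x y z t)) 0 = z * pdu (pdu f) 0 - 1 ∧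
    pdv (pdu (augmentedDistSq f x y z t)) 0 = z * pdv (pdu f) 0 ∧
    pdv (pdv (augmentedDistSq f x y z t)) 0 = z * pdv (pdv f) 0 - 1 := by
  rw [augmentedDistSq_eq_expanded, pdu_eq_dirDeriv, pdv_eq_dirDeriv] at *
  refine ⟨?_, ?_, ?_⟩ <;> simp (disch := fun_prop (disch := simp)) [h00, h10, h01] <;> ring

theorem augmentedDistSq_third_order (hf : ContDiff ℝ ∞ f) (h00 : f 0 = 0) (h10 : pdu f 0 = 0)
    (h01 : pdv f 0 = 0) :
    pdu (pdu (pdu (augmentedDistSq f x y z t))) 0 = z * pdu (pdu (pdu f)) 0 ∧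
    pdv (pdu (pdu (augmentedDistSq f x y z t))) 0 = z * pdv (pdu (pdu f)) 0 ∧
    pdv (pdv (pdu (augmentedDistSq f x y z t))) 0 = z * pdv (pdv (pdu f)) 0 ∧
    pdv (pdv (pdv (augmentedDistSq f x y z t))) 0 = z * pdv (pdv (pdv f)) 0 := by
  rw [augmentedDistSq_eq_expanded, pdu_eq_dirDeriv, pdv_eq_dirDeriv] at *
  refine ⟨?_, ?_, ?_, ?_⟩ <;> simp (disch := fun_prop (disch := simp)) [h00, h10, h01]

theorem augmentedDistSq_fourth_order (hf : ContDiff ℝ ∞ f) (h00 : f 0 = 0) (h10 : pdu f 0 = 0)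
    (h01 : pdv f 0 = 0) :
    pdu (pdu (pdu (pdu (augmentedDistSq f x y z t)))) 0 =
      z * pdu (pdu (pdu (pdu f))) 0 - 3 * pdu (pdu f) 0 ^ 2 ∧
    pdv (pdu (pdu (pdu (augmentedDistSq f x y z t)))) 0 =
      z * pdv (pdu (pdu (pdu f))) 0 - 3 * pdu (pdu f) 0 * pdv (pdu f) 0 ∧
    pdv (pdv (pdu (pdu (augmentedDistSq f x y z t)))) 0 =
      z * pdv (pdv (pdu (pdu f))) 0 - pdu (pdu f) 0 * pdv (pdv f) 0 - 2 * pdv (pdu f) 0 ^ 2 ∧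
    pdv (pdv (pdv (pdu (augmentedDistSq f x y z t)))) 0 =
      z * pdv (pdv (pdv (pdu f))) 0 - 3 * pdv (pdv f) 0 * pdv (pdu f) 0 ∧
    pdv (pdv (pdv (pdv (augmentedDistSq f x y z t)))) 0 =
      z * pdv (pdv (pdv (pdv f))) 0 - 3 * pdv (pdv f) 0 ^ 2 := by
  rw [augmentedDistSq_eq_expanded, pdu_eq_dirDeriv, pdv_eq_dirDeriv] at *
  refine ⟨?_, ?_, ?_, ?_, ?_⟩ <;> simp (disch := fun_prop (disch := simp)) [h00, h10, h01] <;> ring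

theorem augmentedDistSq_fifth_order (hf : ContDiff ℝ ∞ f) (h00 : f 0 = 0) (h10 : pdu f 0 = 0)
    (h01 : pdv f 0 = 0) :
    pdu (pdu (pdu (pdu (pdu (augmentedDistSq f x y z t))))) 0 =
      z * pdu (pdu (pdu (pdu (pdu f)))) 0 - 10 * pdu (pdu f) 0 * pdu (pdu (pdu f)) 0 ∧
    pdv (pdv (pdv (pdv (pdv (augmentedDistSq f x y z t))))) 0 =
      z * pdv (pdv (pdv (pdv (pdv f)))) 0 - 10 * pdv (pdv f) 0 * pdv (pdv (pdv f)) 0 := by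
  rw [augmentedDistSq_eq_expanded, pdu_eq_dirDeriv, pdv_eq_dirDeriv] at *
  constructor <;> simp (disch := fun_prop (disch := simp)) [h00, h10, h01] <;> ring

end augmentedDistSq

/-- Taylor coefficients (partial derivatives at the origin) of the augmented distance
squared function `Φ(u,v,x,y,z,t) = -(1/2)(‖(x,y,z)-g(u,v)‖² - t²)` for a Monge form
surface `g(u,v) = (u,v,f(u,v))`. -/
theorem stmt17
    (f : ℝ × ℝ → ℝ) (hf : ContDiff ℝ (⊤ : ℕ∞) f)
    (k1 k2 a30 a21 a12 a03 a40 a31 a22 a13 a04 a50 a05 : ℝ)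
    (h00 : f 0 = 0) (h10 : pdu f 0 = 0) (h01 : pdv f 0 = 0)
    (h20 : pdu (pdu f) 0 = k1) (h11 : pdv (pdu f) 0 = 0) (h02 : pdv (pdv f) 0 = k2)
    (h30 : pdu (pdu (pdu f)) 0 = a30) (h21 : pdv (pdu (pdu f)) 0 = a21)
    (h12 : pdv (pdv (pdu f)) 0 = a12) (h03 : pdv (pdv (pdv f)) 0 = a03)
    (h40 : pdu (pdu (pdu (pdu f))) 0 = a40)
    (h31 : pdv (pdu (pdu (pdu f))) 0 = a31)
    (h22 : pdv (pdv (pdu (pdu f))) 0 = a22)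
    (h13 : pdv (pdv (pdv (pdu f))) 0 = a13)
    (h04 : pdv (pdv (pdv (pdv f))) 0 = a04)
    (h50 : pdu (pdu (pdu (pdu (pdu f)))) 0 = a50)
    (h05 : pdv (pdv (pdv (pdv (pdv f)))) 0 = a05)
    (x y z t : ℝ) (φ : ℝ × ℝ → ℝ)
    (hφ : φ = fun p : ℝ × ℝ =>
      -(1/2) * ((x - p.1)^2 + (y - p.2)^2 + (z - f p)^2 - t^2)) :
    φ 0 = (t^2 - x^2 - y^2 - z^2) / 2 ∧
    pdu φ 0 = x ∧ pdv φ 0 = y ∧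
    pdu (pdu φ) 0 = k1 * z - 1 ∧ pdv (pdu φ) 0 = 0 ∧ pdv (pdv φ) 0 = k2 * z - 1 ∧
    pdu (pdu (pdu φ)) 0 = a30 * z ∧ pdv (pdu (pdu φ)) 0 = a21 * z ∧
    pdv (pdv (pdu φ)) 0 = a12 * z ∧ pdv (pdv (pdv φ)) 0 = a03 * z ∧
    pdu (pdu (pdu (pdu φ))) 0 = a40 * z - 3 * k1 ^ 2 ∧
    pdv (pdu (pdu (pdu φ))) 0 = a31 * z ∧
    pdv (pdv (pdu (pdu φ))) 0 = a22 * z - k1 * k2 ∧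
    pdv (pdv (pdv (pdu φ))) 0 = a13 * z ∧
    pdv (pdv (pdv (pdv φ))) 0 = a04 * z - 3 * k2 ^ 2 ∧
    pdu (pdu (pdu (pdu (pdu φ)))) 0 = a50 * z - 10 * k1 * a30 ∧
    pdv (pdv (pdv (pdv (pdv φ)))) 0 = a05 * z - 10 * k2 * a03 := by
  obtain rfl : φ = augmentedDistSq f x y z t := hφ
  rw [augmentedDistSq_apply_zero h00]
  simp only [augmentedDistSq_first_order hf h10 h01, augmentedDistSq_second_order hf h00 h10 h01,
    augmentedDistSq_third_order hf h00 h10 h01, augmentedDistSq_fourth_order hf h00 h10 h01,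
    augmentedDistSq_fifth_order hf h00 h10 h01, h20, h11, h02, h30, h21, h12, h03, h40, h31, h22,
    h13, h04, h50, h05, true_and]
  and_intros <;> ring
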